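/- arXiv:1706.07292 — 6 statements merged into one kernel-verified Lean document; each statement's English description precedes it below -/
import Mathlib

section
/- Let k ≥ 1 be an integer. Any finite simple C4-free graph with minimum degree at least k + 1 contains k pairwise vertex-disjoint cycles. -/
open Finset
open scoped Classical

variable {V : Type*}

/-- `nbrIn G A x` is the number of neighbors of `x` lying in `A`, i.e. `d_A(x)`. -/
noncomputable def nbrIn (G : SimpleGraph V) (A : Finset V) (x : V) : ℕ :=
  (A.filter fun y => G.Adj x y).card

/-- `G` contains no cycle of length four: there are no four distinct vertices
`w,x,y,z` with `wx, xy, yz, zw` all edges. -/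
def C4Free (G : SimpleGraph V) : Prop :=
  ∀ w x y z : V, w ≠ x → w ≠ y → w ≠ z → x ≠ y → x ≠ z → y ≠ z →
    ¬(G.Adj w x ∧ G.Adj x y ∧ G.Adj y z ∧ G.Adj z w)

/-- `A` is `f`-good: every vertex of `A` has at least `f u` neighbors in `A`. -/
def IsGood (G : SimpleGraph V) (f : V → ℕ) (A : Finset V) : Prop :=
  ∀ u ∈ A, f u ≤ nbrIn G A u

/-- `A` is `g`-degenerate: every non-empty subset `H ⊆ A` has a vertex `u`
with `d_H(u) ≤ g u`. -/
def IsDegenerate (G : SimpleGraph V) (g : V → ℤ) (A : Finset V) : Prop :=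
  ∀ H ⊆ A, H.Nonempty → ∃ u ∈ H, (nbrIn G H u : ℤ) ≤ g u

/-- `(A,B)` is a partition of the vertex set: disjoint, non-empty, covering. -/
def IsPartition [Fintype V] (A B : Finset V) : Prop :=
  Disjoint A B ∧ A.Nonempty ∧ B.Nonempty ∧ A ∪ B = Finset.univ

/-- `(A,B)` is a feasible pair: disjoint non-empty sets with `A` being `a`-good
and `B` being `b`-good. -/
def FeasiblePair (G : SimpleGraph V) (a b : V → ℕ) (A B : Finset V) : Prop :=
  Disjoint A B ∧ A.Nonempty ∧ B.Nonempty ∧ IsGood G a A ∧ IsGood G b B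

/-- `(A,B)` is an `(a,b)`-partition: a partition with `A` being `(a-1)`-degenerate
and `B` being `(b-1)`-degenerate. -/
def ABPartition [Fintype V] (G : SimpleGraph V) (a b : V → ℕ) (A B : Finset V) : Prop :=
  IsPartition A B ∧ IsDegenerate G (fun x => (a x : ℤ) - 1) A ∧
    IsDegenerate G (fun x => (b x : ℤ) - 1) B

/-- The number of edges of the subgraph of `G` induced on `A`. -/
noncomputable def edgesIn (G : SimpleGraph V) (A : Finset V) : ℕ :=
  ((A ×ˢ A).filter fun p => G.Adj p.1 p.2).card / 2

/-- The weight `w(A,B) = |E(G[A])| + |E(G[B])| + Σ_{x∈A} b(x) + Σ_{x∈B} a(x)`. -/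
noncomputable def weight (G : SimpleGraph V) (a b : V → ℕ) (A B : Finset V) : ℕ :=
  edgesIn G A + edgesIn G B + ∑ x ∈ A, b x + ∑ x ∈ B, a x

/-- `(A,B)` belongs to `𝒫`: it is an `(a,b)`-partition of maximum weight among
all `(a,b)`-partitions. -/
def MaxAB [Fintype V] (G : SimpleGraph V) (a b : V → ℕ) (A B : Finset V) : Prop :=
  ABPartition G a b A B ∧
    ∀ A' B' : Finset V, ABPartition G a b A' B' → weight G a b A' B' ≤ weight G a b A B

/-- `starSet G f A` is `A* = {x ∈ A : d_A(x) ≤ f(x) - 1}`. -/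
noncomputable def starSet (G : SimpleGraph V) (f : V → ℕ) (A : Finset V) : Finset V :=
  A.filter fun x => nbrIn G A x < f x

/-!
Let `C` be a shortest cycle. If a vertex `v` off `C` had two neighbours `x ≠ y` on `C`, then
each of the two arcs of `C` between `x` and `y`, closed up through `v`, would be a cycle, so
both arcs have length at most two; an arc of length two is a path `x z y` with `z ≠ v`, and
`x y` would have two common neighbours, giving a `C₄`. Hence deleting `C` lowers every
remaining degree by at most one. A shortest cycle is also chordless, so its vertices have
only two neighbours on it; when the minimum degree is at least three some vertex therefore
survives the deletion, and induction on `k` finishes the proof.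
-/

theorem C4Free.eq_of_adj_of_adj {G : SimpleGraph V} (hG : C4Free G) {x y a b : V} (hxy : x ≠ y)
    (hxa : G.Adj x a) (hay : G.Adj a y) (hxb : G.Adj x b) (hby : G.Adj b y) : a = b := by
  by_contra hab
  exact hG x a y b hxa.ne hxy hxb.ne hay.ne hab hby.ne.symm ⟨hxa, hay, hby.symm, hxb.symm⟩

theorem C4Free.comap {W : Type*} {G : SimpleGraph V} {H : SimpleGraph W} (f : H ↪g G)
    (hG : C4Free G) : C4Free H := by
  intro w x y z hwx hwy hwz hxy hxz hyz ⟨h₁, h₂, h₃, h₄⟩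
  exact hG _ _ _ _ (f.injective.ne hwx) (f.injective.ne hwy) (f.injective.ne hwz)
    (f.injective.ne hxy) (f.injective.ne hxz) (f.injective.ne hyz)
    ⟨f.map_adj_iff.2 h₁, f.map_adj_iff.2 h₂, f.map_adj_iff.2 h₃, f.map_adj_iff.2 h₄⟩

namespace SimpleGraph

open Walk

variable {G : SimpleGraph V}

theorem exists_isCycle_of_two_le_degree [Fintype V] [Nonempty V] (hdeg : ∀ v, 2 ≤ G.degree v) :
    ∃ (a : V) (c : G.Walk a a), c.IsCycle := by
  have : Nonempty (Σ u v, G.Path u v) := ⟨⟨Classical.arbitrary V, _, Path.nil⟩⟩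
  obtain ⟨⟨u, v, p, hp⟩, hmax⟩ :=
    Finite.exists_max fun p : Σ u v, G.Path u v => p.2.2.1.length
  have hnbr : ∀ y, G.Adj u y → y ∈ p.support := fun y hy => by
    by_contra hyp
    have := hmax ⟨y, v, cons hy.symm p, (cons_isPath_iff _ _).2 ⟨hp, hyp⟩⟩
    simp at this
  obtain ⟨y, hy, hysnd⟩ := exists_mem_ne
    (by rw [G.card_neighborFinset_eq_degree u]; exact hdeg u) p.snd
  rw [mem_neighborFinset] at hy
  refine ⟨y, cons hy.symm (p.takeUntil y (hnbr y hy)),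
    (cons_isCycle_iff _ _).2 ⟨hp.takeUntil _, fun he => hysnd ?_⟩⟩
  refine (hp.snd_of_toSubgraph_adj (adj_toSubgraph_iff_mem_edges.2 ?_)).symm
  rw [Sym2.eq_swap]
  exact edges_takeUntil_subset_edges _ _ he

theorem Walk.IsCycle.exists_isPath_pair {a x y : V} {c : G.Walk a a} (hc : c.IsCycle)
    (hx : x ∈ c.support) (hy : y ∈ c.support) (hxy : x ≠ y) :
    ∃ p q : G.Walk x y, p.IsPath ∧ q.IsPath ∧ p.length + q.length = c.length ∧
      p.edges ⊆ c.edges ∧ q.edges ⊆ c.edges ∧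
      p.support ⊆ c.support ∧ q.support ⊆ c.support := by
  set c' := c.rotate x hx
  have hc' : c'.IsCycle := hc.rotate hx
  have hy' : y ∈ c'.support := (mem_support_rotate_iff ..).2 hy
  have hspec := c'.take_spec hy'
  have hedges : c'.edges ⊆ c.edges := (rotate_edges c x hx).perm.subset
  have hsupp : c'.support ⊆ c.support := fun _ => (mem_support_rotate_iff ..).1
  refine ⟨c'.takeUntil y hy', (c'.dropUntil y hy').reverse, hc'.isPath_takeUntil hy',
    (isPath_reverse_iff _).2 ((hspec ▸ hc').isPath_of_append_right (not_nil_of_ne hxy)),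
    ?_, List.Subset.trans (edges_takeUntil_subset_edges ..) hedges, ?_,
    List.Subset.trans (support_takeUntil_subset_support ..) hsupp, ?_⟩
  · rw [length_reverse, ← length_append, hspec, length_rotate]
  · rw [edges_reverse]
    exact fun e he => hedges (edges_dropUntil_subset_edges _ _ (List.mem_reverse.1 he))
  · rw [support_reverse]
    exact fun v hv => hsupp (support_dropUntil_subset_support _ _ (List.mem_reverse.1 hv))

section ShortestCycle

variable {a : V} {c : G.Walk a a}

theorem length_le_length_add_length_of_egirth_eq (hg : G.egirth = c.length) {x y : V}
    {p q : G.Walk x y} (hp : p.IsPath) (hq : q.IsPath) (hpq : p ≠ q) :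
    c.length ≤ p.length + q.length := by
  obtain ⟨_, _, _, d, hd, hlen⟩ := hp.exists_isCycle_length_le_add_of_ne hq hpq
  have := egirth_le_length hd
  rw [hg] at this
  exact (Nat.cast_le.1 this).trans hlen

theorem eq_of_adj_of_adj_of_egirth_eq (hG : C4Free G) (hc : c.IsCycle) (hg : G.egirth = c.length)
    {v x y : V} (hv : v ∉ c.support) (hx : x ∈ c.support) (hy : y ∈ c.support)
    (hvx : G.Adj v x) (hvy : G.Adj v y) : x = y := by
  by_contra hxy
  obtain ⟨p, q, hp, hq, hlen, -, -, hpc, hqc⟩ := hc.exists_isPath_pair hx hy hxy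
  let r : G.Walk x y := cons hvx.symm (cons hvy nil)
  have hr : r.IsPath := by simp [r, hvx.ne', hvy.ne, hxy]
  have hvr : v ∈ r.support := by simp [r]
  have short (s : G.Walk x y) (hs : s.IsPath) (hsc : s.support ⊆ c.support) :
      c.length ≤ s.length + 2 :=
    length_le_length_add_length_of_egirth_eq hg hs hr fun h => hv (hsc (h ▸ hvr))
  have := hc.three_le_length
  have hp2 := short p hp hpc
  have hq2 := short q hq hqc
  -- an arc of length two gives a second common neighbour of `x` and `y`
  obtain ⟨s, hsc, hs⟩ : ∃ s : G.Walk x y, s.support ⊆ c.support ∧ s.length = 2 := by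
    rcases (by omega : p.length = 2 ∨ q.length = 2) with h | h
    exacts [⟨p, hpc, h⟩, ⟨q, hqc, h⟩]
  have hxs : G.Adj x s.snd := s.adj_snd (by simp [← length_eq_zero_iff, hs])
  have hsy : G.Adj s.snd y := by
    simpa [s.getVert_of_length_le hs.le] using s.adj_getVert_succ (i := 1) (by omega)
  exact hv (hG.eq_of_adj_of_adj hxy hvx.symm hvy hxs hsy ▸ hsc (s.getVert_mem_support 1))

theorem toSubgraph_adj_of_egirth_eq (hc : c.IsCycle) (hg : G.egirth = c.length) {x y : V}
    (hx : x ∈ c.support) (hy : y ∈ c.support) (hxy : G.Adj x y) : c.toSubgraph.Adj x y := by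
  obtain ⟨p, q, hp, hq, hlen, hpc, hqc, -, -⟩ := hc.exists_isPath_pair hx hy hxy.ne
  let e : G.Walk x y := cons hxy nil
  have he : e.IsPath := by simp [e, hxy.ne]
  have short (s : G.Walk x y) (hs : s.IsPath) (hs1 : s.length ≠ 1) : c.length ≤ s.length + 1 :=
    length_le_length_add_length_of_egirth_eq hg hs he fun h => hs1 (by simp [h, e])
  have := hc.three_le_length
  obtain ⟨s, hsc, hs⟩ : ∃ s : G.Walk x y, s.edges ⊆ c.edges ∧ s.length = 1 := by
    by_contra! h
    have := short p hp (h p hpc)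
    have := short q hq (h q hqc)
    omega
  have hsnd : s.snd = y := s.getVert_of_length_le hs.le
  have hxs := s.toSubgraph_adj_snd (by simp [← length_eq_zero_iff, hs])
  rw [hsnd, adj_toSubgraph_iff_mem_edges] at hxs
  exact adj_toSubgraph_iff_mem_edges.2 (hsc hxs)

theorem degree_le_two_of_egirth_eq [Fintype V] (hc : c.IsCycle) (hg : G.egirth = c.length)
    {x : V} (hx : x ∈ c.support) (hnbr : ∀ y, G.Adj x y → y ∈ c.support) :
    G.degree x ≤ 2 := by
  rw [← card_neighborSet_eq_degree, ← Nat.card_eq_fintype_card, Nat.card_coe_set_eq,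
    ← hc.ncard_neighborSet_toSubgraph_eq_two hx]
  exact Set.ncard_le_ncard (fun y hy => toSubgraph_adj_of_egirth_eq hc hg hx (hnbr y hy) hy)
    (Set.toFinite _)

theorem degree_le_degree_induce_add_one [Fintype V] (hG : C4Free G) (hc : c.IsCycle)
    (hg : G.egirth = c.length) {v : V} (hv : v ∉ c.support) :
    G.degree v ≤ (G.induce {w | w ∉ c.support}).degree ⟨v, hv⟩ + 1 := by
  rw [← card_neighborFinset_eq_degree, ← card_neighborFinset_eq_degree,
    ← card_map (Function.Embedding.subtype _), map_neighborFinset_induce,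
    ← card_filter_add_card_filter_not (· ∈ c.support), add_comm]
  gcongr
  · intro y hy
    simpa using hy
  · refine card_le_one.2 fun x hx y hy => ?_
    simp only [mem_filter, mem_neighborFinset] at hx hy
    exact eq_of_adj_of_adj_of_egirth_eq hG hc hg hv hx.2 hy.2 hx.1 hy.1

end ShortestCycle

def HasDisjointCycles (G : SimpleGraph V) (n : ℕ) : Prop :=
  ∃ C : Fin n → Σ a, G.Walk a a,
    (∀ i, (C i).2.IsCycle) ∧ Pairwise fun i j => (C i).2.support.Disjoint (C j).2.support

theorem HasDisjointCycles.cons {s : Set V} {a : V} {c : G.Walk a a} (hc : c.IsCycle)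
    (hcs : ∀ v ∈ c.support, v ∉ s) {n : ℕ} (h : (G.induce s).HasDisjointCycles n) :
    G.HasDisjointCycles (n + 1) := by
  obtain ⟨C, hC, hdisj⟩ := h
  let e : G.induce s ↪g G := Embedding.induce s
  have hoff (i : Fin n) : c.support.Disjoint ((C i).2.map e.toHom).support := by
    intro x hx hx'
    rw [Walk.support_map, List.mem_map] at hx'
    obtain ⟨y, -, rfl⟩ := hx'
    exact hcs y hx y.2
  refine ⟨Fin.cons ⟨a, c⟩ fun i => ⟨_, (C i).2.map e.toHom⟩,
    Fin.cases hc fun i => (hC i).map e.injective, fun i j hij => ?_⟩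
  cases i using Fin.cases <;> cases j using Fin.cases
  · exact absurd rfl hij
  · exact hoff _
  · exact (hoff _).symm
  · rw [Fin.cons_succ, Fin.cons_succ, Walk.support_map, Walk.support_map]
    exact List.disjoint_map Subtype.val_injective (hdisj fun h => hij (congrArg Fin.succ h))

theorem _root_.C4Free.hasDisjointCycles [Fintype V] [Nonempty V] {G : SimpleGraph V}
    (hG : C4Free G) (k : ℕ) (hdeg : ∀ v, k + 2 ≤ G.degree v) :
    G.HasDisjointCycles (k + 1) := by
  induction k generalizing V with
  | zero =>
    obtain ⟨a, c, hc⟩ := exists_isCycle_of_two_le_degree hdeg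
    exact ⟨fun _ => ⟨a, c⟩, fun _ => hc,
      fun i j hij => (hij (Subsingleton.elim (α := Fin 1) i j)).elim⟩
  | succ k ih =>
    obtain ⟨a₀, c₀, hc₀⟩ :=
      exists_isCycle_of_two_le_degree fun v => (by omega : 2 ≤ k + 1 + 2).trans (hdeg v)
    obtain ⟨a, c, hc, hg⟩ := exists_egirth_eq_length.2 fun h => h c₀ hc₀
    obtain ⟨v, hv⟩ : ∃ v, v ∉ c.support := by
      by_contra! h
      have := degree_le_two_of_egirth_eq hc hg (h a) fun y _ => h y
      have := hdeg a
      omega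
    have : Nonempty {w | w ∉ c.support} := ⟨⟨v, hv⟩⟩
    refine HasDisjointCycles.cons (s := {w | w ∉ c.support}) hc (fun _ h h' => h' h) <|
      ih (hG.comap (Embedding.induce _)) fun w => ?_
    have : G.degree w ≤ (G.induce {w | w ∉ c.support}).degree w + 1 :=
      degree_le_degree_induce_add_one hG hc hg w.2
    have := hdeg w
    -- the two degrees of `w` in `G.induce _` are computed with different `Fintype` instances
    convert (by omega : k + 2 ≤ (G.induce {w | w ∉ c.support}).degree w)

end SimpleGraph

theorem disjoint_cycles_general [Fintype V] [Nonempty V] (G : SimpleGraph V) (k : ℕ)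
    (hC4 : C4Free G) (hdeg : ∀ x : V, k + 1 ≤ G.degree x) :
    ∃ (u : Fin k → V) (c : ∀ i, G.Walk (u i) (u i)),
      (∀ i, (c i).IsCycle) ∧
      ∀ i j, i ≠ j → ∀ v : V, v ∈ (c i).support → v ∉ (c j).support := by
  cases k with
  | zero => exact ⟨Fin.elim0, fun i => i.elim0, fun i => i.elim0, fun i => i.elim0⟩
  | succ k =>
    obtain ⟨C, hC, hdisj⟩ := hC4.hasDisjointCycles k hdeg
    exact ⟨fun i => (C i).1, fun i => (C i).2, hC, fun i j hij v hi hj => hdisj hij hi hj⟩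

/-- Any `C4`-free graph with minimum degree at least `k+1` contains `k` pairwise
vertex-disjoint cycles. -/
theorem disjoint_cycles [Fintype V] [Nonempty V] (G : SimpleGraph V) (k : ℕ) (hk : 1 ≤ k)
    (hC4 : C4Free G) (hdeg : ∀ x : V, k + 1 ≤ G.degree x) :
    ∃ (u : Fin k → V) (c : ∀ i, G.Walk (u i) (u i)),
      (∀ i, (c i).IsCycle) ∧
      ∀ i j, i ≠ j → ∀ v : V, v ∈ (c i).support → v ∉ (c j).support :=
  disjoint_cycles_general G k hC4 hdeg
end

section
/- There exist a finite simple C4-free graph G with at least one vertex and two functions a, b : V(G) → ℕ with a(x) ≥ 2 and b(x) ≥ 2 for all x, such that d_G(x) = a(x) + b(x) − 2 for every vertex x ∈ V(G), and moreover for every partition (A, B) of V(G) there is either a vertex x ∈ A with d_A(x) < a(x) or a vertex x ∈ B with d_B(x) < b(x). -/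
open Finset
open scoped Classical

variable {V : Type*}

theorem c4Free_of_card_le_three [Fintype V] (G : SimpleGraph V) (hV : Fintype.card V ≤ 3) :
    C4Free G := by
  intro w x y z hwx hwy hwz hxy hxz hyz _
  have hfour : #({w, x, y, z} : Finset V) = 4 := by
    rw [card_insert_of_notMem (by simp [hwx, hwy, hwz]), card_insert_of_notMem (by simp [hxy, hxz]),
      card_pair hyz]
  have := card_le_univ ({w, x, y, z} : Finset V)
  omega

theorem nbrIn_lt_card (G : SimpleGraph V) {A : Finset V} {x : V} (hx : x ∈ A) :
    nbrIn G A x < #A :=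
  card_lt_card (filter_ssubset.2 ⟨x, hx, G.irrefl⟩)

/-- There exist a `C4`-free graph `G` and functions `a, b ≥ 2` with
`d_G(x) = a(x) + b(x) - 2` for every vertex `x`, such that no partition `(A,B)` of `V(G)`
satisfies `d_A(x) ≥ a(x)` on `A` and `d_B(x) ≥ b(x)` on `B`. -/
theorem sharpness_example :
    ∃ (n : ℕ) (G : SimpleGraph (Fin n)) (a b : Fin n → ℕ),
      0 < n ∧ C4Free G ∧ (∀ x, 2 ≤ a x) ∧ (∀ x, 2 ≤ b x) ∧
      (∀ x, G.degree x + 2 = a x + b x) ∧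
      ∀ A B : Finset (Fin n), Disjoint A B → A.Nonempty → B.Nonempty →
        A ∪ B = Finset.univ →
        (∃ x ∈ A, nbrIn G A x < a x) ∨ (∃ x ∈ B, nbrIn G B x < b x) := by
  -- The triangle with `a = b = 2`: the part `A` has at most two vertices, so `d_A < 2` on it.
  refine ⟨3, ⊤, fun _ => 2, fun _ => 2, by norm_num, c4Free_of_card_le_three ⊤ le_rfl,
    fun _ => le_rfl, fun _ => le_rfl, fun x => ?_, ?_⟩
  · convert congrArg (· + 2) (SimpleGraph.IsRegularOfDegree.top (V := Fin 3) x)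
    rfl
  · intro A B hAB ⟨x, hx⟩ hB hcover
    have hcard : #A + #B = 3 := by
      rw [← card_union_of_disjoint hAB, hcover, card_univ, Fintype.card_fin]
    have hB_pos := hB.card_pos
    exact Or.inl ⟨x, hx, (nbrIn_lt_card ⊤ hx).trans_le (by omega : #A ≤ 2)⟩
end

section
/- Let G be a finite simple graph and a, b : V(G) → ℕ functions such that d_G(x) ≥ a(x) + b(x) − 1 for every vertex x ∈ V(G). If G has a feasible pair, then G has a feasible partition, i.e., a partition (A, B) of V(G) with A a-good and B b-good. -/
open Finset
open scoped Classical

variable {V : Type*}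

private lemma nbrIn_mono (G : SimpleGraph V) {A A' : Finset V} (h : A ⊆ A') (u : V) :
    nbrIn G A u ≤ nbrIn G A' u :=
  Finset.card_le_card (Finset.filter_subset_filter _ h)

private lemma nbrIn_compl_add [Fintype V] (G : SimpleGraph V) (B : Finset V) (u : V) :
    nbrIn G (Finset.univ \ B) u + nbrIn G B u = G.degree u := by
  classical
  have hdisj : Disjoint ((Finset.univ \ B).filter (fun y => G.Adj u y))
      (B.filter (fun y => G.Adj u y)) :=
    Finset.disjoint_filter_filter Finset.sdiff_disjoint
  have hunion : (Finset.univ \ B).filter (fun y => G.Adj u y) ∪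
      B.filter (fun y => G.Adj u y) = Finset.univ.filter (fun y => G.Adj u y) := by
    rw [← Finset.filter_union, Finset.sdiff_union_of_subset (Finset.subset_univ B)]
  have hdeg : (Finset.univ.filter (fun y => G.Adj u y)).card = G.degree u := by
    rw [SimpleGraph.degree]
    congr 1
    ext v
    simp [SimpleGraph.mem_neighborFinset]
  rw [nbrIn, nbrIn, ← hdeg, ← hunion, Finset.card_union_of_disjoint hdisj]


/-- If `d_G(x) ≥ a(x) + b(x) - 1` for every vertex and `G` has a feasible pair, then `G` has
a feasible partition. -/
theorem feasible_pair_to_partition [Fintype V] (G : SimpleGraph V) (a b : V → ℕ)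
    (hdeg : ∀ x : V, a x + b x ≤ G.degree x + 1)
    (hfp : ∃ A B : Finset V, FeasiblePair G a b A B) :
    ∃ A B : Finset V, IsPartition A B ∧ IsGood G a A ∧ IsGood G b B := by
  classical
  obtain ⟨A0, B0, hfp0⟩ := hfp
  set S := Finset.univ.powerset.filter (fun B : Finset V => ∃ A, FeasiblePair G a b A B) with hS
  have hne : S.Nonempty := ⟨B0, by simp [hS]; exact ⟨A0, hfp0⟩⟩
  obtain ⟨B, hBmem, hBmax⟩ := Finset.exists_max_image S Finset.card hne
  rw [hS, Finset.mem_filter] at hBmem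
  obtain ⟨-, A, hdisjAB, hAne, hBne, hAgood, hBgood⟩ := hBmem
  refine ⟨Finset.univ \ B, B, ⟨Finset.sdiff_disjoint, ?_, hBne,
    Finset.sdiff_union_of_subset (Finset.subset_univ B)⟩, ?_, hBgood⟩
  · obtain ⟨x, hx⟩ := hAne
    exact ⟨x, Finset.mem_sdiff.2 ⟨Finset.mem_univ x,
      Finset.disjoint_left.mp hdisjAB hx⟩⟩
  · intro u hu
    by_cases huA : u ∈ A
    · calc a u ≤ nbrIn G A u := hAgood u huA
        _ ≤ nbrIn G (Finset.univ \ B) u := nbrIn_mono G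
          (fun v hv => Finset.mem_sdiff.2 ⟨Finset.mem_univ v,
            Finset.disjoint_left.mp hdisjAB hv⟩) u
    · have huB : u ∉ B := (Finset.mem_sdiff.1 hu).2
      have hlt : nbrIn G B u < b u := by
        by_contra hge
        push_neg at hge
        have hgood' : IsGood G b (insert u B) := by
          intro v hv
          rcases Finset.mem_insert.1 hv with heq | hvB
          · rw [heq]; exact le_trans hge (nbrIn_mono G (Finset.subset_insert u B) u)
          · exact le_trans (hBgood v hvB) (nbrIn_mono G (Finset.subset_insert u B) v)
        have hmem' : insert u B ∈ S := by
          rw [hS, Finset.mem_filter]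
          exact ⟨Finset.mem_powerset.2 (Finset.subset_univ _),
            A, Finset.disjoint_left.2 (fun v hv hv' => by
              rcases Finset.mem_insert.1 hv' with heq | hvB
              · exact huA (heq ▸ hv)
              · exact Finset.disjoint_left.mp hdisjAB hv hvB),
            hAne, ⟨u, Finset.mem_insert_self u B⟩, hAgood, hgood'⟩
        have := hBmax _ hmem'
        rw [Finset.card_insert_of_notMem huB] at this
        omega
      have hsum := nbrIn_compl_add G B u
      have := hdeg u
      omega
end

section
/- Under the standing hypotheses (G is a finite simple C4-free graph with at least one vertex, a, b : V(G) → ℕ satisfy a(x) ≥ 2 and b(x) ≥ 2 for all x, d_G(x) = a(x) + b(x) − 1 for every vertex x, and G has no feasible pair), there exists an (a,b)-partition of V(G), that is, a partition (A, B) with A (a−1)-degenerate and B (b−1)-degenerate. -/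
open Finset
open scoped Classical

variable {V : Type*}

/-!
Among all partitions `(A, B)` of `V(G)` take one of minimum weight. If some non-empty `H ⊆ A`
had `d_H(u) ≥ a(u)` for all `u ∈ H`, moving any `u ∈ H` from `A` to `B` would change the weight
by `d_B(u) - d_A(u) + a(u) - b(u) ≤ 2 (a(u) - d_A(u)) - 1 < 0`, using `d_G(u) ≤ a(u) + b(u) - 1`.
So `A` is `(a-1)`-degenerate, and symmetrically `B` is `(b-1)`-degenerate.
-/

namespace SimpleGraph

variable (G : SimpleGraph V)

lemma nbrIn_mono {H A : Finset V} (h : H ⊆ A) (u : V) : nbrIn G H u ≤ nbrIn G A u :=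
  card_le_card (filter_subset_filter _ h)

lemma nbrIn_union {A B : Finset V} (h : Disjoint A B) (x : V) :
    nbrIn G (A ∪ B) x = nbrIn G A x + nbrIn G B x := by
  rw [nbrIn, filter_union, card_union_of_disjoint (disjoint_filter_filter h)]
  rfl

lemma nbrIn_univ [Fintype V] (x : V) : nbrIn G univ x = G.degree x := by
  rw [nbrIn, ← card_neighborFinset_eq_degree]
  congr 1
  ext y
  simp

lemma nbrIn_insert {u : V} {B : Finset V} (hu : u ∉ B) (x : V) :
    nbrIn G (insert u B) x = nbrIn G B x + if G.Adj x u then 1 else 0 := by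
  rw [nbrIn, filter_insert]
  split_ifs with h
  · exact card_insert_of_notMem (by simp [hu])
  · rfl

lemma nbrIn_erase_self (u : V) (A : Finset V) : nbrIn G (A.erase u) u = nbrIn G A u := by
  rw [nbrIn, nbrIn, filter_erase, erase_eq_of_notMem (by simp)]

lemma card_adjPairs_eq_sum_nbrIn (s : Finset V) :
    #((s ×ˢ s).filter fun p => G.Adj p.1 p.2) = ∑ x ∈ s, nbrIn G s x := by
  rw [card_filter, sum_product]
  exact sum_congr rfl fun x _ => (card_filter _ _).symm

lemma card_adjPairs_insert {u : V} {B : Finset V} (hu : u ∉ B) :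
    #(((insert u B) ×ˢ (insert u B)).filter fun p => G.Adj p.1 p.2)
      = #((B ×ˢ B).filter fun p => G.Adj p.1 p.2) + 2 * nbrIn G B u := by
  have hcount : ∑ x ∈ B, (if G.Adj x u then 1 else 0) = nbrIn G B u := by
    rw [nbrIn, card_filter]
    simp only [G.adj_comm]
  rw [card_adjPairs_eq_sum_nbrIn, card_adjPairs_eq_sum_nbrIn, sum_insert hu,
    sum_congr rfl fun x _ => G.nbrIn_insert hu x, sum_add_distrib, hcount,
    G.nbrIn_insert hu, if_neg (G.irrefl (v := u))]
  ring

lemma edgesIn_insert {u : V} {B : Finset V} (hu : u ∉ B) :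
    edgesIn G (insert u B) = edgesIn G B + nbrIn G B u := by
  rw [edgesIn, edgesIn, G.card_adjPairs_insert hu, Nat.add_mul_div_left _ _ two_pos]

lemma edgesIn_eq_edgesIn_erase_add {u : V} {A : Finset V} (hu : u ∈ A) :
    edgesIn G A = edgesIn G (A.erase u) + nbrIn G A u := by
  conv_lhs => rw [← insert_erase hu]
  rw [G.edgesIn_insert (notMem_erase u A), nbrIn_erase_self]

lemma weight_comm (a b : V → ℕ) (A B : Finset V) : weight G a b A B = weight G b a B A := by
  unfold weight
  ring

lemma weight_move {a b : V → ℕ} {A B : Finset V} {u : V} (huA : u ∈ A) (huB : u ∉ B) :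
    weight G a b A B + nbrIn G B u + a u
      = weight G a b (A.erase u) (insert u B) + nbrIn G A u + b u := by
  unfold weight
  rw [G.edgesIn_eq_edgesIn_erase_add huA, G.edgesIn_insert huB, ← add_sum_erase A b huA,
    sum_insert huB]
  ring

end SimpleGraph

namespace IsPartition

variable [Fintype V]

lemma symm {A B : Finset V} (h : IsPartition A B) : IsPartition B A :=
  ⟨h.1.symm, h.2.2.1, h.2.1, by rw [union_comm, h.2.2.2]⟩

lemma move {A B : Finset V} (h : IsPartition A B) {u : V} (hu : u ∈ A)
    (hne : (A.erase u).Nonempty) : IsPartition (A.erase u) (insert u B) := by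
  obtain ⟨hdisj, -, -, hunion⟩ := h
  refine ⟨?_, hne, insert_nonempty u B, ?_⟩
  · rw [disjoint_insert_right]
    exact ⟨notMem_erase u A, hdisj.mono_left (erase_subset u A)⟩
  · rw [union_insert, ← insert_union, insert_erase hu, hunion]

lemma exists_of_nontrivial [Nontrivial V] : ∃ A B : Finset V, IsPartition A B := by
  obtain ⟨x, y, hxy⟩ := exists_pair_ne V
  refine ⟨{x}, {x}ᶜ, disjoint_compl_right, singleton_nonempty x, ⟨y, by simpa using hxy.symm⟩, ?_⟩
  exact union_compl _

lemma exists_min [Nontrivial V] (f : Finset V → Finset V → ℕ) :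
    ∃ A B : Finset V, IsPartition A B ∧
      ∀ A' B' : Finset V, IsPartition A' B' → f A B ≤ f A' B' := by
  obtain ⟨A₀, B₀, h₀⟩ := exists_of_nontrivial (V := V)
  obtain ⟨⟨A, B⟩, hmem, hmin⟩ := exists_min_image
    (univ.filter fun p : Finset V × Finset V => IsPartition p.1 p.2) (fun p => f p.1 p.2)
    ⟨(A₀, B₀), by simpa using h₀⟩
  exact ⟨A, B, (mem_filter.mp hmem).2, fun A' B' h' => hmin (A', B') (by simpa using h')⟩

end IsPartition

theorem isDegenerate_of_weight_min [Fintype V] {G : SimpleGraph V} {a b : V → ℕ}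
    (ha : ∀ x, 0 < a x) (hdeg : ∀ x, G.degree x < a x + b x) {A B : Finset V}
    (hP : IsPartition A B)
    (hmin : ∀ A' B' : Finset V, IsPartition A' B' → weight G a b A B ≤ weight G a b A' B') :
    IsDegenerate G (fun x => (a x : ℤ) - 1) A := by
  rintro H hHA ⟨u, huH⟩
  by_contra! hdense
  have huA : u ∈ A := hHA huH
  have huB : u ∉ B := disjoint_left.mp hP.1 huA
  have hauH : a u ≤ nbrIn G H u := by
    have := hdense u huH
    omega
  have hau : a u ≤ nbrIn G A u := hauH.trans (G.nbrIn_mono hHA u)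
  have hne : (A.erase u).Nonempty := by
    have : 0 < nbrIn G (A.erase u) u := G.nbrIn_erase_self u A ▸ (ha u).trans_le hau
    exact (card_pos.mp this).mono (filter_subset _ _)
  have hsplit : nbrIn G A u + nbrIn G B u = G.degree u := by
    rw [← G.nbrIn_union hP.1, hP.2.2.2, G.nbrIn_univ]
  have hmove := G.weight_move (a := a) (b := b) huA huB
  have hle := hmin _ _ (hP.move huA hne)
  have := hdeg u
  omega

theorem exists_ab_partition_general [Fintype V] [Nonempty V] (G : SimpleGraph V) (a b : V → ℕ)
    (ha : ∀ x : V, 2 ≤ a x) (hb : ∀ x : V, 2 ≤ b x)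
    (hdeg : ∀ x : V, G.degree x + 1 = a x + b x) :
    ∃ A B : Finset V, ABPartition G a b A B := by
  obtain ⟨x⟩ := ‹Nonempty V›
  obtain ⟨y, hxy⟩ := (G.degree_pos_iff_exists_adj x).mp (by have := hdeg x; have := ha x; omega)
  have : Nontrivial V := nontrivial_of_ne x y hxy.ne
  have hdegA : ∀ x, G.degree x < a x + b x := fun x => by have := hdeg x; omega
  have hdegB : ∀ x, G.degree x < b x + a x := fun x => by have := hdeg x; omega
  obtain ⟨A, B, hP, hmin⟩ := IsPartition.exists_min (weight G a b)
  refine ⟨A, B, hP, isDegenerate_of_weight_min (fun x => (ha x).trans_lt' two_pos) hdegA hP hmin,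
    isDegenerate_of_weight_min (fun x => (hb x).trans_lt' two_pos) hdegB hP.symm
      fun A' B' h' => ?_⟩
  rw [← G.weight_comm a b, ← G.weight_comm a b]
  exact hmin B' A' h'.symm

/-- Claim 2: under the standing hypotheses, `G` has an `(a,b)`-partition. -/
theorem exists_ab_partition [Fintype V] [Nonempty V] (G : SimpleGraph V) (a b : V → ℕ)
    (hC4 : C4Free G) (ha : ∀ x : V, 2 ≤ a x) (hb : ∀ x : V, 2 ≤ b x)
    (hdeg : ∀ x : V, G.degree x + 1 = a x + b x)
    (hnf : ¬ ∃ A B : Finset V, FeasiblePair G a b A B) :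
    ∃ A B : Finset V, ABPartition G a b A B :=
  exists_ab_partition_general G a b ha hb hdeg
end

section
/- Under the standing hypotheses (G is a finite simple C4-free graph, a, b : V(G) → ℕ satisfy a(x) ≥ 2 and b(x) ≥ 2 for all x, d_G(x) = a(x) + b(x) − 1 for every vertex x, and G has no feasible pair), for any maximum-weight (a,b)-partition (A, B) ∈ 𝒫, every vertex of A* is adjacent in G to every vertex of B*. -/
open Finset
open scoped Classical

variable {V : Type*}

private lemma S_eq_sum (G : SimpleGraph V) (A : Finset V) :
    ((A ×ˢ A).filter fun p => G.Adj p.1 p.2).card = ∑ x ∈ A, nbrIn G A x := by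
  rw [Finset.card_filter, Finset.sum_product]
  exact Finset.sum_congr rfl fun x _ => by rw [nbrIn, Finset.card_filter]

private lemma nbrIn_insert {u : V} {B : Finset V} (G : SimpleGraph V) (hu : u ∉ B) (x : V) :
    nbrIn G (insert u B) x = nbrIn G B x + if G.Adj x u then 1 else 0 := by
  unfold nbrIn
  rw [Finset.filter_insert]
  by_cases h : G.Adj x u
  · rw [if_pos h, if_pos h,
      Finset.card_insert_of_notMem (fun hmem => hu (Finset.mem_filter.1 hmem).1)]
  · rw [if_neg h, if_neg h, Nat.add_zero]

private lemma S_insert {u : V} {B : Finset V} (G : SimpleGraph V) (hu : u ∉ B) :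
    (((insert u B) ×ˢ (insert u B)).filter fun p => G.Adj p.1 p.2).card
      = ((B ×ˢ B).filter fun p => G.Adj p.1 p.2).card + 2 * nbrIn G B u := by
  rw [S_eq_sum, S_eq_sum, Finset.sum_insert hu]
  have h0 : nbrIn G (insert u B) u = nbrIn G B u := by
    rw [nbrIn_insert G hu, if_neg (G.irrefl), Nat.add_zero]
  have h1 : ∑ x ∈ B, nbrIn G (insert u B) x
      = ∑ x ∈ B, (nbrIn G B x + if G.Adj x u then 1 else 0) :=
    Finset.sum_congr rfl fun x _ => nbrIn_insert G hu x
  have h2 : (∑ x ∈ B, if G.Adj x u then 1 else 0) = nbrIn G B u := by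
    rw [nbrIn, Finset.card_filter]
    exact Finset.sum_congr rfl fun x _ => by rw [G.adj_comm]
  rw [h0, h1, Finset.sum_add_distrib, h2]
  ring

private lemma edgesIn_insert {u : V} {B : Finset V} (G : SimpleGraph V) (hu : u ∉ B) :
    edgesIn G (insert u B) = edgesIn G B + nbrIn G B u := by
  unfold edgesIn
  rw [S_insert G hu]
  omega

private lemma edgesIn_erase {u : V} {A : Finset V} (G : SimpleGraph V) (hu : u ∈ A) :
    edgesIn G A = edgesIn G (A.erase u) + nbrIn G A u := by
  have h0 : u ∉ A.erase u := Finset.notMem_erase u A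
  have h1 : insert u (A.erase u) = A := Finset.insert_erase hu
  have h3 : nbrIn G (A.erase u) u = nbrIn G A u := by
    conv_rhs => rw [← h1]
    rw [nbrIn_insert G h0, if_neg (G.irrefl), Nat.add_zero]
  rw [← h3]
  conv_lhs => rw [← h1]
  rw [edgesIn_insert G h0]

private lemma nbrIn_add_nbrIn [Fintype V] {A B : Finset V} (G : SimpleGraph V)
    (hdisj : Disjoint A B) (hcov : A ∪ B = Finset.univ) (x : V) :
    nbrIn G A x + nbrIn G B x = G.degree x := by
  rw [← SimpleGraph.card_neighborFinset_eq_degree, SimpleGraph.neighborFinset_eq_filter]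
  rw [← hcov, Finset.filter_union]
  rw [Finset.card_union_of_disjoint (Finset.disjoint_filter_filter hdisj)]
  rfl

/-- Claim 4: for any `(A,B) ∈ 𝒫`, every vertex of `A*` is adjacent to every vertex of
`B*`. -/
theorem star_complete_bipartite [Fintype V] (G : SimpleGraph V) (a b : V → ℕ)
    (hC4 : C4Free G) (ha : ∀ x : V, 2 ≤ a x) (hb : ∀ x : V, 2 ≤ b x)
    (hdeg : ∀ x : V, G.degree x + 1 = a x + b x)
    (hnf : ¬ ∃ A B : Finset V, FeasiblePair G a b A B)
    (A B : Finset V) (hAB : MaxAB G a b A B) :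
    ∀ u ∈ starSet G a A, ∀ v ∈ starSet G b B, G.Adj u v := by
  intro u hu v hv
  by_contra hadj
  obtain ⟨⟨⟨hdisj, hAne, hBne, hcov⟩, hdegA, hdegB⟩, hmax⟩ := hAB
  rw [starSet, Finset.mem_filter] at hu hv
  obtain ⟨huA, hua⟩ := hu
  obtain ⟨hvB, hvb⟩ := hv
  have huB : u ∉ B := Finset.disjoint_left.1 hdisj huA
  have hvA : v ∉ A := fun h => Finset.disjoint_left.1 hdisj h hvB
  have hdegu := nbrIn_add_nbrIn G hdisj hcov u
  have hdegv := nbrIn_add_nbrIn G hdisj hcov v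
  have hdgu := hdeg u
  have hdgv := hdeg v
  have hbu : b u ≤ nbrIn G B u := by omega
  have hav : a v ≤ nbrIn G A v := by omega
  -- nonemptiness of the shrunk sides
  have hsub1 : B.filter (fun y => G.Adj u y) ⊆ B.erase v := by
    intro x hx
    rw [Finset.mem_filter] at hx
    exact Finset.mem_erase.2 ⟨fun h => hadj (h ▸ hx.2), hx.1⟩
  have hsub2 : A.filter (fun y => G.Adj v y) ⊆ A.erase u := by
    intro x hx
    rw [Finset.mem_filter] at hx
    exact Finset.mem_erase.2 ⟨fun h => hadj ((h ▸ hx.2).symm), hx.1⟩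
  have hBene : (B.erase v).Nonempty := by
    rw [← Finset.card_pos]
    have := Finset.card_le_card hsub1
    have hbu2 := hb u
    rw [nbrIn] at hbu
    omega
  have hAene : (A.erase u).Nonempty := by
    rw [← Finset.card_pos]
    have := Finset.card_le_card hsub2
    have hav2 := ha v
    rw [nbrIn] at hav
    omega
  -- Partition 1 : (A.erase u, insert u B)
  have hpart1 : IsPartition (A.erase u) (insert u B) := by
    refine ⟨?_, hAene, Finset.insert_nonempty _ _, ?_⟩
    · rw [Finset.disjoint_insert_right]
      exact ⟨Finset.notMem_erase u A,
        Finset.disjoint_of_subset_left (Finset.erase_subset u A) hdisj⟩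
    · rw [Finset.union_insert, ← Finset.insert_union, Finset.insert_erase huA]
      exact hcov
  have hdegA1 : IsDegenerate G (fun x => (a x : ℤ) - 1) (A.erase u) :=
    fun H hH hne => hdegA H (hH.trans (Finset.erase_subset u A)) hne
  have hw1 : weight G a b A B + 1 ≤ weight G a b (A.erase u) (insert u B) := by
    have e1 : edgesIn G A = edgesIn G (A.erase u) + nbrIn G A u := edgesIn_erase G huA
    have e2 : edgesIn G (insert u B) = edgesIn G B + nbrIn G B u := edgesIn_insert G huB
    have e3 : ∑ x ∈ A.erase u, b x + b u = ∑ x ∈ A, b x := Finset.sum_erase_add A b huA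
    have e4 : ∑ x ∈ insert u B, a x = a u + ∑ x ∈ B, a x := Finset.sum_insert huB
    unfold weight
    omega
  obtain ⟨K, hKs, hKne, hKg⟩ :
      ∃ K ⊆ insert u B, K.Nonempty ∧ ∀ x ∈ K, b x ≤ nbrIn G K x := by
    by_contra hcon
    push_neg at hcon
    have hd : IsDegenerate G (fun x => (b x : ℤ) - 1) (insert u B) := by
      intro H hH hne
      obtain ⟨x, hx, hx2⟩ := hcon H hH hne
      refine ⟨x, hx, ?_⟩
      show (nbrIn G H x : ℤ) ≤ (b x : ℤ) - 1
      omega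
    have := hmax (A.erase u) (insert u B) ⟨hpart1, hdegA1, hd⟩
    omega
  -- Partition 2 : (insert v A, B.erase v)
  have hpart2 : IsPartition (insert v A) (B.erase v) := by
    refine ⟨?_, Finset.insert_nonempty _ _, hBene, ?_⟩
    · rw [Finset.disjoint_insert_left]
      exact ⟨Finset.notMem_erase v B,
        Finset.disjoint_of_subset_right (Finset.erase_subset v B) hdisj⟩
    · rw [Finset.insert_union, ← Finset.union_insert, Finset.insert_erase hvB]
      exact hcov
  have hdegB2 : IsDegenerate G (fun x => (b x : ℤ) - 1) (B.erase v) :=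
    fun H hH hne => hdegB H (hH.trans (Finset.erase_subset v B)) hne
  have hw2 : weight G a b A B + 1 ≤ weight G a b (insert v A) (B.erase v) := by
    have e1 : edgesIn G B = edgesIn G (B.erase v) + nbrIn G B v := edgesIn_erase G hvB
    have e2 : edgesIn G (insert v A) = edgesIn G A + nbrIn G A v := edgesIn_insert G hvA
    have e3 : ∑ x ∈ B.erase v, a x + a v = ∑ x ∈ B, a x := Finset.sum_erase_add B a hvB
    have e4 : ∑ x ∈ insert v A, b x = b v + ∑ x ∈ A, b x := Finset.sum_insert hvA
    unfold weight
    omega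
  obtain ⟨H, hHs, hHne, hHg⟩ :
      ∃ H ⊆ insert v A, H.Nonempty ∧ ∀ x ∈ H, a x ≤ nbrIn G H x := by
    by_contra hcon
    push_neg at hcon
    have hd : IsDegenerate G (fun x => (a x : ℤ) - 1) (insert v A) := by
      intro H hH hne
      obtain ⟨x, hx, hx2⟩ := hcon H hH hne
      refine ⟨x, hx, ?_⟩
      show (nbrIn G H x : ℤ) ≤ (a x : ℤ) - 1
      omega
    have := hmax (insert v A) (B.erase v) ⟨hpart2, hd, hdegB2⟩
    omega
  -- v ∉ K
  have hvK : v ∉ K := by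
    intro hvK
    have h1 := hKg v hvK
    have h2 : K.filter (fun y => G.Adj v y) ⊆ B.filter (fun y => G.Adj v y) := by
      intro x hx
      rw [Finset.mem_filter] at hx ⊢
      refine ⟨?_, hx.2⟩
      rcases Finset.mem_insert.1 (hKs hx.1) with h | h
      · exact absurd (h ▸ hx.2).symm hadj
      · exact h
    have h4 : nbrIn G K v ≤ nbrIn G B v := Finset.card_le_card h2
    omega
  -- u ∉ H
  have huH : u ∉ H := by
    intro huH
    have h1 := hHg u huH
    have h2 : H.filter (fun y => G.Adj u y) ⊆ A.filter (fun y => G.Adj u y) := by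
      intro x hx
      rw [Finset.mem_filter] at hx ⊢
      refine ⟨?_, hx.2⟩
      rcases Finset.mem_insert.1 (hHs hx.1) with h | h
      · exact absurd (h ▸ hx.2) hadj
      · exact h
    have h4 : nbrIn G H u ≤ nbrIn G A u := Finset.card_le_card h2
    omega
  -- (H, K) is a feasible pair
  refine hnf ⟨H, K, ?_, hHne, hKne, hHg, hKg⟩
  rw [Finset.disjoint_left]
  intro x hxH hxK
  rcases Finset.mem_insert.1 (hHs hxH) with h | h
  · exact hvK (h ▸ hxK)
  · rcases Finset.mem_insert.1 (hKs hxK) with h' | h'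
    · exact huH (h' ▸ hxH)
    · exact Finset.disjoint_left.1 hdisj h h'
end

section
/- Under the standing hypotheses (G is a finite simple C4-free graph, a, b : V(G) → ℕ satisfy a(x) ≥ 2 and b(x) ≥ 2 for all x, d_G(x) = a(x) + b(x) − 1 for every vertex x, and G has no feasible pair), for any (A, B) ∈ 𝒫 we have |A∖A*| ≥ 2 and |B∖B*| ≥ 2. -/
open Finset
open scoped Classical

variable {V : Type*}

namespace ClaimAux

variable {V : Type*} (G : SimpleGraph V)

lemma nbrIn_mono {A B : Finset V} (h : A ⊆ B) (x : V) : nbrIn G A x ≤ nbrIn G B x :=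
  Finset.card_le_card (Finset.filter_subset_filter _ h)

lemma nbrIn_le_card (A : Finset V) (x : V) : nbrIn G A x ≤ A.card :=
  Finset.card_le_card (Finset.filter_subset _ _)

lemma nbrIn_union {A B : Finset V} (h : Disjoint A B) (x : V) :
    nbrIn G (A ∪ B) x = nbrIn G A x + nbrIn G B x := by
  unfold nbrIn
  rw [Finset.filter_union,
    Finset.card_union_of_disjoint (h.mono (Finset.filter_subset _ _) (Finset.filter_subset _ _))]

lemma nbrIn_insert {A : Finset V} {y : V} (h : y ∉ A) (x : V) :
    nbrIn G (insert y A) x = nbrIn G A x + (if G.Adj x y then 1 else 0) := by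
  unfold nbrIn
  rw [Finset.filter_insert]
  split
  · rw [Finset.card_insert_of_notMem (fun hc => h (Finset.mem_of_mem_filter _ hc))]
  · omega

lemma nbrIn_erase_self {B : Finset V} (y : V) : nbrIn G (B.erase y) y = nbrIn G B y := by
  unfold nbrIn
  congr 1
  ext t
  simp only [Finset.mem_filter, Finset.mem_erase]
  constructor
  · rintro ⟨⟨_, h⟩, h2⟩; exact ⟨h, h2⟩
  · rintro ⟨h1, h2⟩; exact ⟨⟨fun e => G.irrefl (e ▸ h2), h1⟩, h2⟩

lemma nbrIn_univ [Fintype V] (x : V) : nbrIn G Finset.univ x = G.degree x := by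
  unfold nbrIn
  rw [← SimpleGraph.card_neighborFinset_eq_degree]
  congr 1
  ext t
  simp [SimpleGraph.mem_neighborFinset]

end ClaimAux
namespace ClaimAux

variable {V : Type*} (G : SimpleGraph V)

noncomputable def Epairs (S : Finset V) : ℕ :=
  ((S ×ˢ S).filter fun p => G.Adj p.1 p.2).card

lemma edgesIn_eq (S : Finset V) : edgesIn G S = Epairs G S / 2 := rfl

lemma Epairs_eq_sum (S : Finset V) : Epairs G S = ∑ x ∈ S, nbrIn G S x := by
  unfold Epairs
  rw [Finset.card_eq_sum_card_fiberwise (f := fun p => p.1) (t := S)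
      (fun p hp => (Finset.mem_product.mp (Finset.mem_filter.mp hp).1).1)]
  refine Finset.sum_congr rfl fun x hx => ?_
  unfold nbrIn
  have hset : (Finset.filter (fun a => a.1 = x)
        (Finset.filter (fun p => G.Adj p.1 p.2) (S ×ˢ S)))
      = (S.filter fun t => G.Adj x t).map
          ⟨fun t => (x, t), fun s t e => (Prod.ext_iff.mp e).2⟩ := by
    ext ⟨p1, p2⟩
    simp only [Finset.mem_filter, Finset.mem_product, Finset.mem_map,
      Function.Embedding.coeFn_mk, Prod.ext_iff]
    constructor
    · rintro ⟨⟨⟨h1, h2⟩, h3⟩, h4⟩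
      exact ⟨p2, ⟨h2, h4 ▸ h3⟩, h4.symm, rfl⟩
    · rintro ⟨t, ⟨htS, hadj⟩, hx', ht'⟩
      subst hx'; subst ht'
      exact ⟨⟨⟨hx, htS⟩, hadj⟩, rfl⟩
  rw [hset, Finset.card_map]

lemma Epairs_insert {S : Finset V} {y : V} (h : y ∉ S) :
    Epairs G (insert y S) = Epairs G S + 2 * nbrIn G S y := by
  rw [Epairs_eq_sum, Epairs_eq_sum, Finset.sum_insert h]
  have h1 : nbrIn G (insert y S) y = nbrIn G S y := by
    rw [nbrIn_insert G h, if_neg (G.irrefl)]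
    omega
  have h2 : ∀ x ∈ S, nbrIn G (insert y S) x = nbrIn G S x + (if G.Adj x y then 1 else 0) :=
    fun x _ => nbrIn_insert G h x
  rw [h1, Finset.sum_congr rfl h2, Finset.sum_add_distrib]
  have h3 : (∑ x ∈ S, if G.Adj x y then 1 else 0) = nbrIn G S y := by
    unfold nbrIn
    rw [Finset.card_filter]
    refine Finset.sum_congr rfl fun x _ => ?_
    rw [G.adj_comm]
  omega

lemma edgesIn_insert {S : Finset V} {y : V} (h : y ∉ S) :
    edgesIn G (insert y S) = edgesIn G S + nbrIn G S y := by
  rw [edgesIn_eq, edgesIn_eq, Epairs_insert G h,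
    Nat.add_mul_div_left _ _ (by norm_num : 0 < 2)]

lemma weight_symm (a b : V → ℕ) (A B : Finset V) :
    weight G a b A B = weight G b a B A := by
  unfold weight; ring

lemma weight_move (a b : V → ℕ) {A B : Finset V} {y : V} (hyB : y ∈ B) (hyA : y ∉ A) :
    weight G a b (insert y A) (B.erase y) + nbrIn G B y + a y
      = weight G a b A B + nbrIn G A y + b y := by
  have h1 : edgesIn G B = edgesIn G (B.erase y) + nbrIn G B y := by
    conv_lhs => rw [← Finset.insert_erase hyB]
    rw [edgesIn_insert G (Finset.notMem_erase y B), nbrIn_erase_self]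
  have h2 : edgesIn G (insert y A) = edgesIn G A + nbrIn G A y := edgesIn_insert G hyA
  have h3 : (∑ x ∈ insert y A, b x) = b y + ∑ x ∈ A, b x := Finset.sum_insert hyA
  have h4 : (∑ x ∈ B, a x) = a y + ∑ x ∈ B.erase y, a x := by
    conv_lhs => rw [← Finset.insert_erase hyB]
    rw [Finset.sum_insert (Finset.notMem_erase y B)]
  unfold weight
  omega

end ClaimAux
namespace ClaimAux

variable {V : Type*} (G : SimpleGraph V)

lemma abPartition_symm [Fintype V] {a b : V → ℕ} {A B : Finset V}
    (h : ABPartition G a b A B) : ABPartition G b a B A :=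
  ⟨⟨h.1.1.symm, h.1.2.2.1, h.1.2.1, by rw [Finset.union_comm]; exact h.1.2.2.2⟩,
    h.2.2, h.2.1⟩

lemma maxAB_symm [Fintype V] {a b : V → ℕ} {A B : Finset V}
    (h : MaxAB G a b A B) : MaxAB G b a B A := by
  refine ⟨abPartition_symm G h.1, fun A' B' hP' => ?_⟩
  have h2 := h.2 B' A' (abPartition_symm G hP')
  rw [weight_symm G b a A' B', weight_symm G b a B A]
  exact h2

lemma two_le_cardA [Fintype V] (a b : V → ℕ) (ha : ∀ x, 2 ≤ a x)
    (hdeg : ∀ x : V, G.degree x + 1 = a x + b x)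
    {A B : Finset V} (hP : ABPartition G a b A B) : 2 ≤ A.card := by
  obtain ⟨⟨hD, hAne, hBne, hU⟩, hdA, hdB⟩ := hP
  by_contra h
  push_neg at h
  obtain ⟨q, hqB, hqle⟩ := hdB B (Finset.Subset.refl B) hBne
  have hqle' : (nbrIn G B q : ℤ) ≤ (b q : ℤ) - 1 := hqle
  have h1 : nbrIn G A q ≤ A.card := nbrIn_le_card G A q
  have h2 : nbrIn G A q + nbrIn G B q = G.degree q := by
    rw [← nbrIn_union G hD, hU, nbrIn_univ]
  have h3 := hdeg q
  have h4 := ha q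
  omega

lemma exists_good [Fintype V] (a b : V → ℕ)
    (hdeg : ∀ x : V, G.degree x + 1 = a x + b x)
    {A B : Finset V} (hAB : MaxAB G a b A B)
    {y : V} (hyB : y ∈ B) (hy : nbrIn G B y < b y) (hBe : (B.erase y).Nonempty) :
    ∃ S : Finset V, S ⊆ insert y A ∧ y ∈ S ∧ IsGood G a S := by
  obtain ⟨⟨⟨hD, hAne, hBne, hU⟩, hdA, hdB⟩, hmax⟩ := hAB
  have hyA : y ∉ A := fun h => Finset.disjoint_left.mp hD h hyB
  by_cases hdg : IsDegenerate G (fun x => (a x : ℤ) - 1) (insert y A)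
  · exfalso
    have hP : IsPartition (insert y A) (B.erase y) := by
      refine ⟨?_, ⟨y, Finset.mem_insert_self _ _⟩, hBe, ?_⟩
      · rw [Finset.disjoint_left]
        intro t ht ht'
        have htB := Finset.mem_of_mem_erase ht'
        rcases Finset.mem_insert.mp ht with rfl | htA
        · exact (Finset.mem_erase.mp ht').1 rfl
        · exact Finset.disjoint_left.mp hD htA htB
      · apply Finset.eq_univ_of_forall
        intro v
        by_cases hv : v = y
        · subst hv; exact Finset.mem_union_left _ (Finset.mem_insert_self _ _)
        · have hvAB : v ∈ A ∪ B := by rw [hU]; exact Finset.mem_univ v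
          rcases Finset.mem_union.mp hvAB with hvv | hvv
          · exact Finset.mem_union_left _ (Finset.mem_insert_of_mem hvv)
          · exact Finset.mem_union_right _ (Finset.mem_erase.mpr ⟨hv, hvv⟩)
    have hP' : ABPartition G a b (insert y A) (B.erase y) :=
      ⟨hP, hdg, fun H hH hne => hdB H (hH.trans (Finset.erase_subset _ _)) hne⟩
    have hle := hmax _ _ hP'
    have heq := weight_move G a b hyB hyA
    have hsplit : nbrIn G A y + nbrIn G B y = G.degree y := by
      rw [← nbrIn_union G hD, hU, nbrIn_univ]
    have hdy := hdeg y
    omega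
  · unfold IsDegenerate at hdg
    push_neg at hdg
    obtain ⟨H, hHs, hHne, hHg⟩ := hdg
    have hgood : IsGood G a H := by
      intro u hu
      have h1 : (a u : ℤ) - 1 < (nbrIn G H u : ℤ) := hHg u hu
      omega
    have hyH : y ∈ H := by
      by_contra hyH
      have hHA : H ⊆ A := by
        intro t ht
        rcases Finset.mem_insert.mp (hHs ht) with rfl | hh
        · exact absurd ht hyH
        · exact hh
      obtain ⟨u, hu, hle⟩ := hdA H hHA hHne
      have hle' : (nbrIn G H u : ℤ) ≤ (a u : ℤ) - 1 := hle
      have h1 := hgood u hu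
      omega
    exact ⟨H, hHs, hyH, hgood⟩

end ClaimAux
namespace ClaimAux

variable {V : Type*} (G : SimpleGraph V)

lemma main [Fintype V] (a b : V → ℕ)
    (hC4 : C4Free G) (ha : ∀ x : V, 2 ≤ a x) (hb : ∀ x : V, 2 ≤ b x)
    (hdeg : ∀ x : V, G.degree x + 1 = a x + b x)
    (hnf : ¬ ∃ A B : Finset V, FeasiblePair G a b A B)
    (A B : Finset V) (hAB : MaxAB G a b A B) :
    2 ≤ (A \ starSet G a A).card := by
  by_contra hcon
  push_neg at hcon
  obtain ⟨⟨hD, hAne, hBne, hU⟩, hdA, hdB⟩ := hAB.1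
  have hdeg' : ∀ x : V, G.degree x + 1 = b x + a x := fun x => by have := hdeg x; omega
  -- both sides have at least two vertices
  have hcardA : 2 ≤ A.card := two_le_cardA G a b ha hdeg hAB.1
  have hcardB : 2 ≤ B.card := two_le_cardA G b a hb hdeg' (abPartition_symm G hAB.1)
  have neAB : ∀ {s t : V}, s ∈ A → t ∈ B → s ≠ t :=
    fun hs ht e => Finset.disjoint_left.mp hD hs (e ▸ ht)
  -- pick a star vertex y ∈ B*
  obtain ⟨y, hyB, hyle⟩ := hdB B (Finset.Subset.refl B) hBne
  have hyle' : (nbrIn G B y : ℤ) ≤ (b y : ℤ) - 1 := hyle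
  have hystar : nbrIn G B y < b y := by omega
  have hyA : y ∉ A := fun h => Finset.disjoint_left.mp hD h hyB
  have hBe : (B.erase y).Nonempty := by
    rw [← Finset.card_pos, Finset.card_erase_of_mem hyB]; omega
  -- the a-good set S ⊆ A ∪ {y}
  obtain ⟨S, hSsub, hyS, hSgood⟩ := exists_good G a b hdeg hAB hyB hystar hBe
  -- extractor of b-good sets H_x ⊆ B ∪ {x} for stars x ∈ A*
  have hH : ∀ x ∈ A, nbrIn G A x < a x →
      ∃ H : Finset V, H ⊆ insert x B ∧ x ∈ H ∧ IsGood G b H := by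
    intro x hxA hx
    have hAe : (A.erase x).Nonempty := by
      rw [← Finset.card_pos, Finset.card_erase_of_mem hxA]; omega
    exact exists_good G b a hdeg' (maxAB_symm G hAB) hxA hx hAe
  -- U3 : every star of A is adjacent to y
  have U3 : ∀ x ∈ A, nbrIn G A x < a x → G.Adj x y := by
    intro x hxA hx
    by_cases hxS : x ∈ S
    · by_contra hnadj
      have h1 : a x ≤ nbrIn G S x := hSgood x hxS
      have h2 : nbrIn G S x ≤ nbrIn G (insert y A) x := nbrIn_mono G hSsub x
      have h3 := nbrIn_insert G hyA x
      rw [if_neg hnadj] at h3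
      omega
    · obtain ⟨H, hHsub, hxH, hHgood⟩ := hH x hxA hx
      have hxB : x ∉ B := fun h => Finset.disjoint_left.mp hD hxA h
      by_cases hyH : y ∈ H
      · have h1 : b y ≤ nbrIn G H y := hHgood y hyH
        have h2 : nbrIn G H y ≤ nbrIn G (insert x B) y := nbrIn_mono G hHsub y
        have h3 := nbrIn_insert G hxB y
        by_contra hnadj
        rw [if_neg (fun hh => hnadj (SimpleGraph.Adj.symm hh))] at h3
        omega
      · exfalso
        apply hnf
        refine ⟨S, H, ?_, ⟨y, hyS⟩, ⟨x, hxH⟩, hSgood, hHgood⟩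
        rw [Finset.disjoint_left]
        intro t htS htH
        rcases Finset.mem_insert.mp (hSsub htS) with rfl | htA
        · exact hyH htH
        · rcases Finset.mem_insert.mp (hHsub htH) with rfl | htB
          · exact hxS htS
          · exact Finset.disjoint_left.mp hD htA htB
  -- case split on |A \ A*|
  have hcard : (A \ starSet G a A).card ≤ 1 := by omega
  rcases Nat.le_one_iff_eq_zero_or_eq_one.mp hcard with hzero | hone
  · -- CASE A = A* : every vertex of A is a star
    have hzero' : A \ starSet G a A = ∅ := Finset.card_eq_zero.mp hzero
    have hallstar : ∀ x ∈ A, nbrIn G A x < a x := by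
      intro x hx
      by_contra hge
      have hmem : x ∈ A \ starSet G a A := Finset.mem_sdiff.mpr
        ⟨hx, fun hm => hge (Finset.mem_filter.mp hm).2⟩
      rw [hzero'] at hmem
      exact Finset.notMem_empty x hmem
    have hAadjy : ∀ x ∈ A, G.Adj y x := fun x hx => (U3 x hx (hallstar x hx)).symm
    -- exactness for members of S ∩ A
    have hexact : ∀ x ∈ A, x ∈ S → a x = nbrIn G A x + 1 := by
      intro x hxA hxS
      have h1 : a x ≤ nbrIn G S x := hSgood x hxS
      have h2 : nbrIn G S x ≤ nbrIn G (insert y A) x := nbrIn_mono G hSsub x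
      have h3 := nbrIn_insert G hyA x
      have h4 : nbrIn G (insert y A) x ≤ nbrIn G A x + 1 := by rw [h3]; split <;> omega
      have h5 := hallstar x hxA
      omega
    -- pick x₀ ∈ S ∩ A, a neighbor of y in S
    have hy0 : 0 < (S.filter fun t => G.Adj y t).card := by
      have h1 : a y ≤ nbrIn G S y := hSgood y hyS
      have h2 := ha y
      unfold nbrIn at h1
      omega
    obtain ⟨x₀, hx₀f⟩ := Finset.card_pos.mp hy0
    have hx₀S : x₀ ∈ S := (Finset.mem_filter.mp hx₀f).1
    have hyx₀ : G.Adj y x₀ := (Finset.mem_filter.mp hx₀f).2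
    have hx₀A : x₀ ∈ A := by
      rcases Finset.mem_insert.mp (hSsub hx₀S) with rfl | hh
      · exact absurd hyx₀ (G.irrefl)
      · exact hh
    have hx₀y : G.Adj x₀ y := hyx₀.symm
    have hex₀ : a x₀ = nbrIn G A x₀ + 1 := hexact x₀ hx₀A hx₀S
    have hsplit₀ : nbrIn G A x₀ + nbrIn G B x₀ = G.degree x₀ := by
      rw [← nbrIn_union G hD, hU, nbrIn_univ]
    have hdx₀ := hdeg x₀
    have hdB₀ : nbrIn G B x₀ = b x₀ := by omega
    obtain ⟨H₀, hH₀s, hx₀H₀, hH₀g⟩ := hH x₀ hx₀A (hallstar x₀ hx₀A)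
    have hx₀B : x₀ ∉ B := fun h => Finset.disjoint_left.mp hD hx₀A h
    -- all B-neighbors of x₀ lie in H₀, in particular y ∈ H₀
    have hfsub : (H₀.filter fun t => G.Adj x₀ t) ⊆ (B.filter fun t => G.Adj x₀ t) := by
      intro t htf
      obtain ⟨htH, hadj⟩ := Finset.mem_filter.mp htf
      rcases Finset.mem_insert.mp (hH₀s htH) with rfl | htB
      · exact absurd hadj (G.irrefl)
      · exact Finset.mem_filter.mpr ⟨htB, hadj⟩
    have hfeq : (H₀.filter fun t => G.Adj x₀ t) = (B.filter fun t => G.Adj x₀ t) := by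
      apply Finset.eq_of_subset_of_card_le hfsub
      have h1 : b x₀ ≤ nbrIn G H₀ x₀ := hH₀g x₀ hx₀H₀
      unfold nbrIn at h1 hdB₀
      omega
    have hyH₀ : y ∈ H₀ := by
      have h1 : y ∈ (B.filter fun t => G.Adj x₀ t) := Finset.mem_filter.mpr ⟨hyB, hx₀y⟩
      rw [← hfeq] at h1
      exact (Finset.mem_filter.mp h1).1
    -- d_B(y) = b y - 1 and d_A(y) = a y
    have hdBy : b y = nbrIn G B y + 1 := by
      have h1 : b y ≤ nbrIn G H₀ y := hH₀g y hyH₀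
      have h2 : nbrIn G H₀ y ≤ nbrIn G (insert x₀ B) y := nbrIn_mono G hH₀s y
      have h3 := nbrIn_insert G hx₀B y
      rw [if_pos hyx₀] at h3
      omega
    have hsplity : nbrIn G A y + nbrIn G B y = G.degree y := by
      rw [← nbrIn_union G hD, hU, nbrIn_univ]
    have hdy := hdeg y
    have hdAy : nbrIn G A y = a y := by omega
    -- |A| = a y and A ⊆ S
    have hAfil : (A.filter fun t => G.Adj y t) = A := Finset.filter_true_of_mem hAadjy
    have hcardAy : A.card = a y := by
      have h1 : nbrIn G A y = A.card := by unfold nbrIn; rw [hAfil]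
      omega
    have hTsub : (S.filter fun t => G.Adj y t) ⊆ A := by
      intro t htf
      obtain ⟨htS, hadj⟩ := Finset.mem_filter.mp htf
      rcases Finset.mem_insert.mp (hSsub htS) with rfl | hh
      · exact absurd hadj (G.irrefl)
      · exact hh
    have hAS : A ⊆ S := by
      have h1 : a y ≤ nbrIn G S y := hSgood y hyS
      have h2 : A.card ≤ (S.filter fun t => G.Adj y t).card := by
        unfold nbrIn at h1; omega
      have h3 := Finset.eq_of_subset_of_card_le hTsub h2
      intro t ht
      have : t ∈ (S.filter fun t => G.Adj y t) := h3 ▸ ht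
      exact (Finset.mem_filter.mp this).1
    -- every vertex of A has an A-neighbor
    have partner : ∀ x ∈ A, ∃ p, p ∈ A ∧ G.Adj x p := by
      intro x hx
      have h1 := hexact x hx (hAS hx)
      have h2 := ha x
      have h3 : 0 < (A.filter fun t => G.Adj x t).card := by unfold nbrIn at h1; omega
      obtain ⟨p, hpf⟩ := Finset.card_pos.mp h3
      exact ⟨p, (Finset.mem_filter.mp hpf).1, (Finset.mem_filter.mp hpf).2⟩
    -- the killing vertex q ∈ B \ {y}
    obtain ⟨q, hqe, hqle⟩ := hdB (B.erase y) (Finset.erase_subset _ _) hBe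
    have hqle' : (nbrIn G (B.erase y) q : ℤ) ≤ (b q : ℤ) - 1 := hqle
    have hqB : q ∈ B := Finset.mem_of_mem_erase hqe
    have hqy : q ≠ y := (Finset.mem_erase.mp hqe).1
    have hdisj2 : Disjoint (B.erase y) (insert y A) := by
      rw [Finset.disjoint_left]
      intro t ht hti
      have htB := Finset.mem_of_mem_erase ht
      rcases Finset.mem_insert.mp hti with rfl | hA'
      · exact (Finset.mem_erase.mp ht).1 rfl
      · exact Finset.disjoint_left.mp hD hA' htB
    have huniv2 : (B.erase y) ∪ (insert y A) = Finset.univ := by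
      apply Finset.eq_univ_of_forall
      intro v
      by_cases hv : v = y
      · subst hv; exact Finset.mem_union_right _ (Finset.mem_insert_self _ _)
      · have hvAB : v ∈ A ∪ B := by rw [hU]; exact Finset.mem_univ v
        rcases Finset.mem_union.mp hvAB with hvv | hvv
        · exact Finset.mem_union_right _ (Finset.mem_insert_of_mem hvv)
        · exact Finset.mem_union_left _ (Finset.mem_erase.mpr ⟨hv, hvv⟩)
    have hsplitq : nbrIn G (B.erase y) q + nbrIn G (insert y A) q = G.degree q := by
      rw [← nbrIn_union G hdisj2, huniv2, nbrIn_univ]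
    have hdq := hdeg q
    have haq := ha q
    have h1lt : 1 < ((insert y A).filter fun t => G.Adj q t).card := by
      have : 2 ≤ nbrIn G (insert y A) q := by omega
      unfold nbrIn at this
      omega
    obtain ⟨t, htm, t', htm', htt'⟩ := Finset.one_lt_card.mp h1lt
    obtain ⟨hti, hqt⟩ := Finset.mem_filter.mp htm
    obtain ⟨hti', hqt'⟩ := Finset.mem_filter.mp htm'
    -- the two C4 configurations
    have killA : ∀ u v : V, u ∈ A → v ∈ A → u ≠ v → G.Adj q u → G.Adj q v → False := by
      intro u v huA hvA huv hqu hqv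
      exact hC4 u q v y (neAB huA hqB) huv (neAB huA hyB) (Ne.symm (neAB hvA hqB)) hqy
        (neAB hvA hyB) ⟨hqu.symm, hqv, (hAadjy v hvA).symm, hAadjy u huA⟩
    have killY : ∀ u : V, u ∈ A → G.Adj q u → G.Adj q y → False := by
      intro u huA hqu hqy'
      obtain ⟨p, hpA, hup⟩ := partner u huA
      exact hC4 u q y p (neAB huA hqB) (neAB huA hyB) hup.ne hqy
        (Ne.symm (neAB hpA hqB)) (Ne.symm (neAB hpA hyB))
        ⟨hqu.symm, hqy', hAadjy p hpA, hup.symm⟩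
    rcases Finset.mem_insert.mp hti with rfl | htA
    · rcases Finset.mem_insert.mp hti' with rfl | htA'
      · exact htt' rfl
      · exact killY t' htA' hqt' hqt
    · rcases Finset.mem_insert.mp hti' with rfl | htA'
      · exact killY t htA hqt hqt'
      · exact killA t t' htA htA' htt' hqt hqt'
  · -- CASE A \ A* = {z}
    obtain ⟨z, hzeq⟩ := Finset.card_eq_one.mp hone
    have hzmem : z ∈ A \ starSet G a A := by rw [hzeq]; exact Finset.mem_singleton_self z
    obtain ⟨hzA, hznstar⟩ := Finset.mem_sdiff.mp hzmem
    have hzge : a z ≤ nbrIn G A z := by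
      by_contra h
      push_neg at h
      exact hznstar (Finset.mem_filter.mpr ⟨hzA, h⟩)
    have h1lt : 1 < (A.filter fun t => G.Adj z t).card := by
      have := ha z
      unfold nbrIn at hzge
      omega
    obtain ⟨t, htm, t', htm', htt'⟩ := Finset.one_lt_card.mp h1lt
    obtain ⟨htA, hzt⟩ := Finset.mem_filter.mp htm
    obtain ⟨htA', hzt'⟩ := Finset.mem_filter.mp htm'
    have hstar : ∀ u ∈ A, G.Adj z u → nbrIn G A u < a u := by
      intro u huA hzu
      by_contra hge
      push_neg at hge
      have hmem : u ∈ A \ starSet G a A := Finset.mem_sdiff.mpr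
        ⟨huA, fun hm => absurd (Finset.mem_filter.mp hm).2 (not_lt.mpr hge)⟩
      rw [hzeq] at hmem
      exact hzu.ne' (Finset.mem_singleton.mp hmem)
    have hty : G.Adj t y := U3 t htA (hstar t htA hzt)
    have hty' : G.Adj t' y := U3 t' htA' (hstar t' htA' hzt')
    exact hC4 t z t' y hzt.ne' htt' (neAB htA hyB) hzt'.ne (neAB hzA hyB) (neAB htA' hyB)
      ⟨hzt.symm, hzt', hty', hty.symm⟩

end ClaimAux
/-- Claim 7: for any `(A,B) ∈ 𝒫`, `|A \ A*| ≥ 2` and `|B \ B*| ≥ 2`. -/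
theorem nonstar_large [Fintype V] (G : SimpleGraph V) (a b : V → ℕ)
    (hC4 : C4Free G) (ha : ∀ x : V, 2 ≤ a x) (hb : ∀ x : V, 2 ≤ b x)
    (hdeg : ∀ x : V, G.degree x + 1 = a x + b x)
    (hnf : ¬ ∃ A B : Finset V, FeasiblePair G a b A B)
    (A B : Finset V) (hAB : MaxAB G a b A B) :
    2 ≤ (A \ starSet G a A).card ∧ 2 ≤ (B \ starSet G b B).card := by
  have hdeg' : ∀ x : V, G.degree x + 1 = b x + a x := fun x => by have := hdeg x; omega
  have hnf' : ¬ ∃ A B : Finset V, FeasiblePair G b a A B := by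
    rintro ⟨X, Y, hdj, hX, hY, hgX, hgY⟩
    exact hnf ⟨Y, X, hdj.symm, hY, hX, hgY, hgX⟩
  exact ⟨ClaimAux.main G a b hC4 ha hb hdeg hnf A B hAB,
    ClaimAux.main G b a hC4 hb ha hdeg' hnf' B A (ClaimAux.maxAB_symm G hAB)⟩
end
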